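/- arXiv:1808.04883 — 3 statements merged into one kernel-verified Lean document; each statement's English description precedes it below -/
import Mathlib

section
/- Consensus-violation recursion: along the CoLa iterates (for which (1/K)Σ_k v_k^t = A x^t), the consensus violation satisfies, for every round t, Σ_{k=1}^K ‖v_k^{t+1} − A x^{t+1}‖² ≤ β Σ_{k=1}^K ‖v_k^t − A x^t‖² + (1−β) c₁(β,γ,K) Σ_{k=1}^K ‖Δv_k^t‖², where c₁(β,γ,K) := γ²K²/(1−β)² and Δv_k^t = A_{[k]} Δx_{[k]}^t is the round-t update at node k. -/
/-! Since `W` has unit column sums, `∑_k v_k^t = K • A x^t` for every `t`. With unit row sums this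
splits the new deviation `v_k^{t+1} − A x^{t+1}` into `∑_l (W_{kl} − 1/K) • (v_l^t − A x^t)`,
which the spectral bound contracts by `β` coordinatewise, plus `γK • (Δv_k − avg Δv)`, whose
total square is at most `∑_k ‖Δv_k‖²`. The two parts are combined by
`‖a + b‖² ≤ ‖a‖² / β + ‖b‖² / (1 − β)`. -/

open scoped RealInnerProductSpace
open Finset

noncomputable section

/-- The matrix–vector product `A x`, viewed in Euclidean space. -/
def mulVecE {d n : ℕ} (A : Matrix (Fin d) (Fin n) ℝ) (x : EuclideanSpace ℝ (Fin n)) :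
    EuclideanSpace ℝ (Fin d) :=
  (WithLp.equiv 2 (Fin d → ℝ)).symm (A.mulVec (WithLp.equiv 2 (Fin n → ℝ) x))

/-- `x_{[k]}`: the restriction of `x` to the coordinates owned by node `k`
(the block of the partition `P`), with all other coordinates set to `0`. -/
def restr {n K : ℕ} (P : Fin n → Fin K) (k : Fin K) (x : EuclideanSpace ℝ (Fin n)) :
    EuclideanSpace ℝ (Fin n) :=
  (WithLp.equiv 2 (Fin n → ℝ)).symm fun i => if P i = k then x i else 0

/-- Average of a family of `K` vectors. -/
def avg {K : ℕ} {E : Type*} [AddCommMonoid E] [Module ℝ E] (w : Fin K → E) : E :=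
  (K : ℝ)⁻¹ • ∑ k, w k

/-- `A_i^T w`: the inner product of the `i`-th column of `A` with `w`. -/
def colDot {d n : ℕ} (A : Matrix (Fin d) (Fin n) ℝ) (i : Fin n)
    (w : EuclideanSpace ℝ (Fin d)) : ℝ :=
  ∑ r, A r i * w r

lemma mulVecE_eq_toEuclideanLin {d n : ℕ} (A : Matrix (Fin d) (Fin n) ℝ) :
    mulVecE A = Matrix.toEuclideanLin A := rfl

lemma sum_eq_card_smul_avg {K : ℕ} {E : Type*} [AddCommGroup E] [Module ℝ E]
    (w : Fin K → E) : ∑ k, w k = (K : ℝ) • avg w := by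
  rcases K.eq_zero_or_pos with rfl | hK
  · simp
  · rw [avg, smul_smul, mul_inv_cancel₀ (by positivity), one_smul]

lemma sum_norm_sub_avg_sq_le {K : ℕ} {E : Type*} [NormedAddCommGroup E] [InnerProductSpace ℝ E]
    (w : Fin K → E) : ∑ k, ‖w k - avg w‖ ^ 2 ≤ ∑ k, ‖w k‖ ^ 2 := by
  have hinner : ∑ k, ⟪w k, avg w⟫ = K * ‖avg w‖ ^ 2 := by
    rw [← sum_inner, sum_eq_card_smul_avg w, real_inner_smul_left, real_inner_self_eq_norm_sq]
  have hsum : ∑ k, ‖w k - avg w‖ ^ 2 = ∑ k, ‖w k‖ ^ 2 - K * ‖avg w‖ ^ 2 := by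
    simp only [norm_sub_sq_real, sum_add_distrib, sum_sub_distrib, ← mul_sum, hinner, sum_const,
      card_univ, Fintype.card_fin, nsmul_eq_mul]
    ring
  rw [hsum]
  exact sub_le_self _ (by positivity)

lemma norm_add_sq_le_div_add_div {E : Type*} [SeminormedAddCommGroup E] (a b : E) {β : ℝ}
    (hβ0 : 0 < β) (hβ1 : β < 1) : ‖a + b‖ ^ 2 ≤ ‖a‖ ^ 2 / β + ‖b‖ ^ 2 / (1 - β) := by
  have hsedrakyan := sq_sum_div_le_sum_sq_div univ ![‖a‖, ‖b‖] (g := ![β, 1 - β])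
    (by simp [Fin.forall_fin_two, hβ0, hβ1])
  simp only [Fin.sum_univ_two, Matrix.cons_val_zero, Matrix.cons_val_one, add_sub_cancel,
    div_one] at hsedrakyan
  calc ‖a + b‖ ^ 2 ≤ (‖a‖ + ‖b‖) ^ 2 := by gcongr; exact norm_add_le a b
    _ ≤ _ := hsedrakyan

lemma sum_norm_sq_sum_smul_le {ι κ : Type*} [Fintype ι] [Fintype κ] (M : ι → ι → ℝ) (c : ℝ)
    (hM : ∀ z : ι → ℝ, ∑ k, (∑ l, M k l * z l) ^ 2 ≤ c * ∑ k, z k ^ 2)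
    (e : ι → EuclideanSpace ℝ κ) :
    ∑ k, ‖∑ l, M k l • e l‖ ^ 2 ≤ c * ∑ k, ‖e k‖ ^ 2 := by
  simp only [EuclideanSpace.real_norm_sq_eq, WithLp.ofLp_sum, WithLp.ofLp_smul, Finset.sum_apply,
    Pi.smul_apply, smul_eq_mul]
  calc _ = ∑ r, ∑ k, (∑ l, M k l * e l r) ^ 2 := sum_comm
    _ ≤ ∑ r, c * ∑ k, e k r ^ 2 := sum_le_sum fun r _ => hM fun l => e l r
    _ = _ := by rw [← mul_sum, sum_comm]

section CoLa

variable {d n K : ℕ} {A : Matrix (Fin d) (Fin n) ℝ} {P : Fin n → Fin K}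
  {W : Matrix (Fin K) (Fin K) ℝ} {γ : ℝ} {x : ℕ → EuclideanSpace ℝ (Fin n)}
  {v : ℕ → Fin K → EuclideanSpace ℝ (Fin d)} {Δx : ℕ → Fin K → EuclideanSpace ℝ (Fin n)}

theorem cola_sum_v_eq_card_smul_mulVecE (hWcol : ∀ l, ∑ k, W k l = 1) (hx0 : x 0 = 0)
    (hv0 : ∀ k, v 0 k = 0)
    (hvupd : ∀ t k, v (t + 1) k
        = ∑ l, W k l • v t l + (γ * K) • mulVecE A (restr P k (Δx t k)))
    (hxupd : ∀ t, x (t + 1) = x t + γ • ∑ k, restr P k (Δx t k)) (t : ℕ) :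
    ∑ k, v t k = (K : ℝ) • mulVecE A (x t) := by
  induction t with
  | zero => simp [hv0, hx0, mulVecE_eq_toEuclideanLin]
  | succ t ih =>
    have hmix : ∑ k, ∑ l, W k l • v t l = ∑ l, v t l := by
      rw [sum_comm]
      simp only [← sum_smul, hWcol, one_smul]
    simp only [hvupd, sum_add_distrib, hmix, ih, hxupd, mulVecE_eq_toEuclideanLin, map_add,
      map_smul, map_sum, ← smul_sum]
    module

theorem cola_deviation_succ (hWrow : ∀ k, ∑ l, W k l = 1)
    (hvupd : ∀ t k, v (t + 1) k
        = ∑ l, W k l • v t l + (γ * K) • mulVecE A (restr P k (Δx t k)))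
    (hxupd : ∀ t, x (t + 1) = x t + γ • ∑ k, restr P k (Δx t k)) {t : ℕ}
    (hsum : ∑ k, v t k = (K : ℝ) • mulVecE A (x t)) (k : Fin K) :
    v (t + 1) k - mulVecE A (x (t + 1))
      = ∑ l, (W k l - (K : ℝ)⁻¹) • (v t l - mulVecE A (x t))
        + (γ * K) • (mulVecE A (restr P k (Δx t k))
          - avg fun l => mulVecE A (restr P l (Δx t l))) := by
  have hK : (K : ℝ) ≠ 0 := Nat.cast_ne_zero.mpr k.pos.ne'
  have hmix : ∑ l, (W k l - (K : ℝ)⁻¹) • (v t l - mulVecE A (x t))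
      = ∑ l, W k l • v t l - mulVecE A (x t) := by
    simp only [sub_smul, smul_sub, sum_sub_distrib, ← sum_smul, ← smul_sum, hWrow, hsum,
      smul_smul, inv_mul_cancel₀ hK, sum_const, card_univ, Fintype.card_fin, nsmul_eq_mul,
      mul_inv_cancel₀ hK, one_smul, sub_self, sub_zero]
  have hAx : mulVecE A (x (t + 1))
      = mulVecE A (x t) + (γ * K) • avg fun l => mulVecE A (restr P l (Δx t l)) := by
    rw [hxupd, mulVecE_eq_toEuclideanLin, map_add, map_smul, map_sum, mul_smul,
      ← sum_eq_card_smul_avg]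
  rw [hvupd, hAx, hmix]
  module

end CoLa

theorem cola_consensus_violation_recursion_general
    {d n K : ℕ}
    (A : Matrix (Fin d) (Fin n) ℝ) (P : Fin n → Fin K)
    (W : Matrix (Fin K) (Fin K) ℝ)
    (hWrow : ∀ k, ∑ l, W k l = 1) (hWcol : ∀ l, ∑ k, W k l = 1)
    (β : ℝ) (hβ0 : 0 < β) (hβ1 : β < 1)
    (hβ : ∀ z : Fin K → ℝ,
      ∑ k, (∑ l, (W k l - (K : ℝ)⁻¹) * z l) ^ 2 ≤ β ^ 2 * ∑ k, z k ^ 2)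
    (γ : ℝ)
    (x : ℕ → EuclideanSpace ℝ (Fin n))
    (v : ℕ → Fin K → EuclideanSpace ℝ (Fin d))
    (Δx : ℕ → Fin K → EuclideanSpace ℝ (Fin n))
    (hx0 : x 0 = 0) (hv0 : ∀ k, v 0 k = 0)
    (hvupd : ∀ t k, v (t + 1) k
        = ∑ l, W k l • v t l + (γ * K) • mulVecE A (restr P k (Δx t k)))
    (hxupd : ∀ t, x (t + 1) = x t + γ • ∑ k, restr P k (Δx t k)) :
    ∀ t, ∑ k, ‖v (t + 1) k - mulVecE A (x (t + 1))‖ ^ 2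
      ≤ β * ∑ k, ‖v t k - mulVecE A (x t)‖ ^ 2
        + (1 - β) * (γ ^ 2 * K ^ 2 / (1 - β) ^ 2)
          * ∑ k, ‖mulVecE A (restr P k (Δx t k))‖ ^ 2 := by
  intro t
  set e := fun l => v t l - mulVecE A (x t)
  set u := fun l => mulVecE A (restr P l (Δx t l))
  have hdev := cola_deviation_succ hWrow hvupd hxupd
    (cola_sum_v_eq_card_smul_mulVecE hWcol hx0 hv0 hvupd hxupd t)
  calc ∑ k, ‖v (t + 1) k - mulVecE A (x (t + 1))‖ ^ 2
      = ∑ k, ‖∑ l, (W k l - (K : ℝ)⁻¹) • e l + (γ * K) • (u k - avg u)‖ ^ 2 := by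
        exact sum_congr rfl fun k _ => by rw [hdev k]
    _ ≤ ∑ k, (‖∑ l, (W k l - (K : ℝ)⁻¹) • e l‖ ^ 2 / β
          + ‖(γ * K) • (u k - avg u)‖ ^ 2 / (1 - β)) :=
        sum_le_sum fun k _ => norm_add_sq_le_div_add_div _ _ hβ0 hβ1
    _ = (∑ k, ‖∑ l, (W k l - (K : ℝ)⁻¹) • e l‖ ^ 2) / β
          + (γ * K) ^ 2 * (∑ k, ‖u k - avg u‖ ^ 2) / (1 - β) := by
        simp only [sum_add_distrib, ← sum_div, norm_smul, mul_pow, Real.norm_eq_abs, sq_abs,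
          ← mul_sum]
    _ ≤ β ^ 2 * (∑ k, ‖e k‖ ^ 2) / β + (γ * K) ^ 2 * (∑ k, ‖u k‖ ^ 2) / (1 - β) := by
        gcongr ?_ / _ + _ * ?_ / _
        · exact sum_norm_sq_sum_smul_le _ _ hβ e
        · exact sum_norm_sub_avg_sq_le u
    _ = _ := by
        field_simp
        ring

/-- Consensus-violation recursion along the CoLa iterates:
`∑_k ‖v_k^{t+1} − A x^{t+1}‖² ≤ β ∑_k ‖v_k^t − A x^t‖²
  + (1−β) c₁(β,γ,K) ∑_k ‖Δv_k^t‖²` with `c₁(β,γ,K) := γ²K²/(1−β)²` and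
`Δv_k^t = A_{[k]} Δx_{[k]}^t`.  Here `β` bounds the spectral contraction of `W − (1/K)𝟙𝟙ᵀ`. -/
theorem cola_consensus_violation_recursion
    {d n K : ℕ} (hK : 0 < K)
    (A : Matrix (Fin d) (Fin n) ℝ) (P : Fin n → Fin K)
    (W : Matrix (Fin K) (Fin K) ℝ)
    (hWnonneg : ∀ k l, 0 ≤ W k l) (hWsymm : ∀ k l, W k l = W l k)
    (hWrow : ∀ k, ∑ l, W k l = 1) (hWcol : ∀ l, ∑ k, W k l = 1)
    (β : ℝ) (hβ0 : 0 < β) (hβ1 : β < 1)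
    (hβ : ∀ z : Fin K → ℝ,
      ∑ k, (∑ l, (W k l - (K : ℝ)⁻¹) * z l) ^ 2 ≤ β ^ 2 * ∑ k, z k ^ 2)
    (γ : ℝ) (hγ : γ ∈ Set.Icc (0 : ℝ) 1)
    (x : ℕ → EuclideanSpace ℝ (Fin n))
    (v : ℕ → Fin K → EuclideanSpace ℝ (Fin d))
    (Δx : ℕ → Fin K → EuclideanSpace ℝ (Fin n))
    (hx0 : x 0 = 0) (hv0 : ∀ k, v 0 k = 0)
    (hvupd : ∀ t k, v (t + 1) k
        = ∑ l, W k l • v t l + (γ * K) • mulVecE A (restr P k (Δx t k)))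
    (hxupd : ∀ t, x (t + 1) = x t + γ • ∑ k, restr P k (Δx t k)) :
    ∀ t, ∑ k, ‖v (t + 1) k - mulVecE A (x (t + 1))‖ ^ 2
      ≤ β * ∑ k, ‖v t k - mulVecE A (x t)‖ ^ 2
        + (1 - β) * (γ ^ 2 * K ^ 2 / (1 - β) ^ 2)
          * ∑ k, ‖mulVecE A (restr P k (Δx t k))‖ ^ 2 :=
  cola_consensus_violation_recursion_general A P W hWrow hWcol β hβ0 hβ1 hβ γ x v Δx hx0 hv0 hvupd
    hxupd
end
end

section
/- Let Δx*_{[k]} be an exact minimizer of the local subproblem G_k^{σ'}(·; v_k, x_{[k]}), and let Δx_{[k]} be a Θ-approximate solution of the same subproblem, for each k = 1,…,K. Writing S(Δx) := Σ_{k=1}^K G_k^{σ'}(Δx_{[k]}; v_k, x_{[k]}), the updates satisfy (σ'/(4τ)) Σ_{k=1}^K ‖A_{[k]} Δx_{[k]}‖² ≤ (1+Θ) ( S(0) − S(Δx*) ) (in expectation over the randomness of the local solvers). -/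
open scoped RealInnerProductSpace
open Finset

noncomputable section

/-- The CoLa data-local quadratic subproblem
`G_k^{σ'}(Δx_{[k]}; v_k, x_{[k]}) = (1/K) f(v_k) + ∇f(v_k)^T A_{[k]} Δx_{[k]}
  + (σ'/(2τ)) ‖A_{[k]} Δx_{[k]}‖² + ∑_{i ∈ P_k} g_i(x_i + (Δx_{[k]})_i)`. -/
def subProb {d n K : ℕ} (A : Matrix (Fin d) (Fin n) ℝ) (P : Fin n → Fin K)
    (f : EuclideanSpace ℝ (Fin d) → ℝ)
    (gradf : EuclideanSpace ℝ (Fin d) → EuclideanSpace ℝ (Fin d))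
    (g : Fin n → ℝ → ℝ) (τ σ' : ℝ) (k : Fin K)
    (vk : EuclideanSpace ℝ (Fin d)) (x Δx : EuclideanSpace ℝ (Fin n)) : ℝ :=
  (K : ℝ)⁻¹ * f vk + ⟪gradf vk, mulVecE A (restr P k Δx)⟫
    + σ' / (2 * τ) * ‖mulVecE A (restr P k Δx)‖ ^ 2
    + ∑ i ∈ univ.filter fun i => P i = k, g i (x i + Δx i)

/-!
On block `k` the subproblem has the form `h = φ + c ‖L ·‖²` with `φ` convex, `L = A_{[k]}`
linear and `c = σ'/(2τ)`. Hence `h` is strongly convex with respect to the seminorm `‖L ·‖`,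
and at the minimizer `zs` this gives `c ‖L zs - L z‖² ≤ h z - h zs`. Taking
`z = Δx_{[k]}` (together with the `Θ`-approximation) and `z = 0`, and combining the two with
`‖a‖² ≤ 2 ‖b‖² + 2 ‖b - a‖²`, bounds `(c/2) ‖L Δx_{[k]}‖²` by `(1 + Θ) (h 0 - h zs)`; then sum
over `k`.
-/

open Filter Topology

theorem convexOn_finset_sum {𝕜 E β ι : Type*} [Semiring 𝕜] [PartialOrder 𝕜]
    [AddCommMonoid E] [AddCommMonoid β] [PartialOrder β] [IsOrderedAddMonoid β]
    [SMul 𝕜 E] [Module 𝕜 β] {s : Set E} (hs : Convex 𝕜 s) (t : Finset ι)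
    {f : ι → E → β} (hf : ∀ i ∈ t, ConvexOn 𝕜 s (f i)) :
    ConvexOn 𝕜 s fun x => ∑ i ∈ t, f i x := by
  classical
  induction t using Finset.induction_on with
  | empty => simpa using convexOn_const (0 : β) hs
  | insert i t hi ih =>
    simp only [Finset.sum_insert hi]
    exact (hf i (mem_insert_self i t)).add (ih fun j hj => hf j (mem_insert_of_mem hj))

theorem norm_smul_add_smul_sq {E : Type*} [NormedAddCommGroup E] [InnerProductSpace ℝ E]
    {a b : ℝ} (hab : a + b = 1) (u w : E) :
    ‖a • u + b • w‖ ^ 2 = a * ‖u‖ ^ 2 + b * ‖w‖ ^ 2 - a * b * ‖u - w‖ ^ 2 := by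
  obtain rfl := eq_sub_of_add_eq hab
  simp only [← real_inner_self_eq_norm_sq, inner_add_left, inner_add_right, inner_sub_left,
    inner_sub_right, real_inner_smul_left, real_inner_smul_right, real_inner_comm u w]
  ring

namespace ConvexOn

variable {F E : Type*} [AddCommGroup F] [Module ℝ F] [NormedAddCommGroup E]
  [InnerProductSpace ℝ E] (L : F →ₗ[ℝ] E) {c : ℝ} {h : F → ℝ}

theorem apply_smul_add_smul_le (hconv : ConvexOn ℝ Set.univ fun z => h z - c * ‖L z‖ ^ 2)
    {a b : ℝ} (ha : 0 ≤ a) (hb : 0 ≤ b) (hab : a + b = 1) (u w : F) :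
    h (a • u + b • w) ≤ a * h u + b * h w - a * b * (c * ‖L u - L w‖ ^ 2) := by
  have hseg := hconv.2 (Set.mem_univ u) (Set.mem_univ w) ha hb hab
  simp only [smul_eq_mul, map_add, map_smul, norm_smul_add_smul_sq hab] at hseg
  linear_combination hseg

theorem mul_sq_norm_sub_le_of_isMinOn
    (hconv : ConvexOn ℝ Set.univ fun z => h z - c * ‖L z‖ ^ 2) {zs : F}
    (hmin : IsMinOn h Set.univ zs) (z : F) :
    c * ‖L zs - L z‖ ^ 2 ≤ h z - h zs := by
  set D := c * ‖L zs - L z‖ ^ 2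
  have hshrunk : ∀ t ∈ Set.Ioo (0 : ℝ) 1, (1 - t) * D ≤ h z - h zs := by
    rintro t ⟨ht0, ht1⟩
    have hseg := hconv.apply_smul_add_smul_le L (sub_nonneg.2 ht1.le) ht0.le (sub_add_cancel 1 t)
      zs z
    have hle := isMinOn_univ_iff.1 hmin ((1 - t) • zs + t • z)
    exact le_of_mul_le_mul_left (by linarith) ht0
  -- Dividing the segment inequality by `t` costs the factor `1 - t`; it is recovered as `t → 0⁺`.
  have hlim : Tendsto (fun t => (1 - t) * D) (𝓝[>] 0) (𝓝 D) := by
    have hcont : Continuous fun t : ℝ => (1 - t) * D := by fun_prop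
    simpa using (hcont.tendsto 0).mono_left nhdsWithin_le_nhds
  exact le_of_tendsto hlim (eventually_of_mem (Ioo_mem_nhdsGT one_pos) hshrunk)

theorem mul_sq_norm_le_of_sub_le (hconv : ConvexOn ℝ Set.univ fun z => h z - c * ‖L z‖ ^ 2)
    (hc : 0 ≤ c) {zs : F} (hmin : IsMinOn h Set.univ zs) {z : F} {Θ : ℝ}
    (happrox : h z - h zs ≤ Θ * (h 0 - h zs)) :
    c / 2 * ‖L z‖ ^ 2 ≤ (1 + Θ) * (h 0 - h zs) := by
  have hz := (hconv.mul_sq_norm_sub_le_of_isMinOn L hmin z).trans happrox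
  have h0 := hconv.mul_sq_norm_sub_le_of_isMinOn L hmin 0
  rw [map_zero, sub_zero] at h0
  have htri : ‖L z‖ ^ 2 ≤ 2 * (‖L zs‖ ^ 2 + ‖L zs - L z‖ ^ 2) :=
    (pow_le_pow_left₀ (norm_nonneg _) (norm_le_norm_add_norm_sub _ _) 2).trans add_sq_le
  linarith [mul_le_mul_of_nonneg_left htri hc]

end ConvexOn

def blockMap {d n K : ℕ} (A : Matrix (Fin d) (Fin n) ℝ) (P : Fin n → Fin K) (k : Fin K) :
    EuclideanSpace ℝ (Fin n) →ₗ[ℝ] EuclideanSpace ℝ (Fin d) :=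
  Matrix.toEuclideanLin A ∘ₗ
    { toFun := restr P k
      map_add' x y := by ext i; by_cases h : P i = k <;> simp [restr, h]
      map_smul' a x := by ext i; by_cases h : P i = k <;> simp [restr, h] }

theorem blockMap_apply {d n K : ℕ} (A : Matrix (Fin d) (Fin n) ℝ) (P : Fin n → Fin K)
    (k : Fin K) (z : EuclideanSpace ℝ (Fin n)) : blockMap A P k z = mulVecE A (restr P k z) :=
  rfl

theorem convexOn_subProb_sub_sq_norm {d n K : ℕ} (A : Matrix (Fin d) (Fin n) ℝ)
    (P : Fin n → Fin K) (f : EuclideanSpace ℝ (Fin d) → ℝ)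
    (gradf : EuclideanSpace ℝ (Fin d) → EuclideanSpace ℝ (Fin d))
    (g : Fin n → ℝ → ℝ) (hg : ∀ i, ConvexOn ℝ Set.univ (g i)) (τ σ' : ℝ) (k : Fin K)
    (vk : EuclideanSpace ℝ (Fin d)) (x : EuclideanSpace ℝ (Fin n)) :
    ConvexOn ℝ Set.univ fun z =>
      subProb A P f gradf g τ σ' k vk x z - σ' / (2 * τ) * ‖blockMap A P k z‖ ^ 2 := by
  have hlin : ConvexOn ℝ Set.univ fun z => (K : ℝ)⁻¹ * f vk + ⟪gradf vk, blockMap A P k z⟫ :=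
    (convexOn_const _ convex_univ).add
      ((innerₗ _ (gradf vk) ∘ₗ blockMap A P k).convexOn convex_univ)
  have hsep : ConvexOn ℝ Set.univ fun z : EuclideanSpace ℝ (Fin n) =>
      ∑ i ∈ univ.filter fun i => P i = k, g i (x i + z i) :=
    convexOn_finset_sum convex_univ _ fun i _ =>
      ((hg i).translate_right (x i)).comp_linearMap (EuclideanSpace.proj i).toLinearMap
  refine (hlin.add hsep).congr fun z _ => ?_
  simp only [subProb, blockMap_apply, Pi.add_apply]
  ring

theorem cola_update_size_bound_general
    {d n K : ℕ} (τ σ' Θ : ℝ)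
    (hτ : 0 < τ) (hσ' : 0 < σ')
    (A : Matrix (Fin d) (Fin n) ℝ) (P : Fin n → Fin K)
    (f : EuclideanSpace ℝ (Fin d) → ℝ)
    (gradf : EuclideanSpace ℝ (Fin d) → EuclideanSpace ℝ (Fin d))
    (g : Fin n → ℝ → ℝ) (hg : ∀ i, ConvexOn ℝ Set.univ (g i))
    (v : Fin K → EuclideanSpace ℝ (Fin d)) (x : EuclideanSpace ℝ (Fin n))
    (Δx Δxstar : Fin K → EuclideanSpace ℝ (Fin n))
    (hmin : ∀ k z, subProb A P f gradf g τ σ' k (v k) x (Δxstar k)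
        ≤ subProb A P f gradf g τ σ' k (v k) x z)
    (happrox : ∀ k,
      subProb A P f gradf g τ σ' k (v k) x (Δx k)
          - subProb A P f gradf g τ σ' k (v k) x (Δxstar k)
        ≤ Θ * (subProb A P f gradf g τ σ' k (v k) x 0
          - subProb A P f gradf g τ σ' k (v k) x (Δxstar k))) :
    σ' / (4 * τ) * ∑ k, ‖mulVecE A (restr P k (Δx k))‖ ^ 2
      ≤ (1 + Θ) * ((∑ k, subProb A P f gradf g τ σ' k (v k) x 0)
          - ∑ k, subProb A P f gradf g τ σ' k (v k) x (Δxstar k)) := by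
  have hc : 0 ≤ σ' / (2 * τ) := by positivity
  have hblock : ∀ k, σ' / (4 * τ) * ‖blockMap A P k (Δx k)‖ ^ 2
      ≤ (1 + Θ) * (subProb A P f gradf g τ σ' k (v k) x 0
          - subProb A P f gradf g τ σ' k (v k) x (Δxstar k)) := fun k => by
    have hbound := (convexOn_subProb_sub_sq_norm A P f gradf g hg τ σ' k (v k) x
      ).mul_sq_norm_le_of_sub_le _ hc (isMinOn_univ_iff.2 (hmin k)) (happrox k)
    rwa [div_div, show 2 * τ * 2 = 4 * τ by ring] at hbound
  calc σ' / (4 * τ) * ∑ k, ‖mulVecE A (restr P k (Δx k))‖ ^ 2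
      = ∑ k, σ' / (4 * τ) * ‖blockMap A P k (Δx k)‖ ^ 2 := mul_sum _ _ _
    _ ≤ ∑ k, (1 + Θ) * (subProb A P f gradf g τ σ' k (v k) x 0
          - subProb A P f gradf g τ σ' k (v k) x (Δxstar k)) := sum_le_sum fun k _ => hblock k
    _ = _ := by rw [← mul_sum, sum_sub_distrib]

/-- If `Δx*_{[k]}` is an exact minimizer of the local subproblem and
`Δx_{[k]}` is a `Θ`-approximate solution of it, then writing
`S(Δx) := ∑_k G_k^{σ'}(Δx_{[k]}; v_k, x_{[k]})`,
`(σ'/(4τ)) ∑_k ‖A_{[k]} Δx_{[k]}‖² ≤ (1+Θ) (S(0) − S(Δx*))`. -/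
theorem cola_update_size_bound
    {d n K : ℕ} (hK : 0 < K) (τ σ' Θ : ℝ)
    (hτ : 0 < τ) (hσ' : 0 < σ') (hΘ : Θ ∈ Set.Icc (0 : ℝ) 1)
    (A : Matrix (Fin d) (Fin n) ℝ) (P : Fin n → Fin K)
    (f : EuclideanSpace ℝ (Fin d) → ℝ)
    (gradf : EuclideanSpace ℝ (Fin d) → EuclideanSpace ℝ (Fin d))
    (hfconv : ConvexOn ℝ Set.univ f)
    (hgrad : ∀ z, HasGradientAt f (gradf z) z)
    (hsmooth : ∀ u z, f u ≤ f z + ⟪gradf z, u - z⟫ + 1 / (2 * τ) * ‖u - z‖ ^ 2)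
    (g : Fin n → ℝ → ℝ) (hg : ∀ i, ConvexOn ℝ Set.univ (g i))
    (v : Fin K → EuclideanSpace ℝ (Fin d)) (x : EuclideanSpace ℝ (Fin n))
    (Δx Δxstar : Fin K → EuclideanSpace ℝ (Fin n))
    (hmin : ∀ k z, subProb A P f gradf g τ σ' k (v k) x (Δxstar k)
        ≤ subProb A P f gradf g τ σ' k (v k) x z)
    (happrox : ∀ k,
      subProb A P f gradf g τ σ' k (v k) x (Δx k)
          - subProb A P f gradf g τ σ' k (v k) x (Δxstar k)
        ≤ Θ * (subProb A P f gradf g τ σ' k (v k) x 0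
          - subProb A P f gradf g τ σ' k (v k) x (Δxstar k))) :
    σ' / (4 * τ) * ∑ k, ‖mulVecE A (restr P k (Δx k))‖ ^ 2
      ≤ (1 + Θ) * ((∑ k, subProb A P f gradf g τ σ' k (v k) x 0)
          - ∑ k, subProb A P f gradf g τ σ' k (v k) x (Δxstar k)) :=
  cola_update_size_bound_general τ σ' Θ hτ hσ' A P f gradf g hg v x Δx Δxstar hmin happrox
end
end

section
/- Averaging improvement for smooth convex functions: let f : ℝ^d → ℝ be convex and (1/τ)-smooth, let W ∈ ℝ^{K×K} be doubly stochastic with nonnegative entries, and for v_1,…,v_K ∈ ℝ^d set v_k' := Σ_{l=1}^K W_{kl} v_l. Then Σ_{k=1}^K f(v_k) − Σ_{k=1}^K f(v_k') ≥ (τ/2) Σ_{k=1}^K Σ_{l=1}^K W_{kl} ‖∇f(v_l) − ∇f(v_k')‖₂². -/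
open scoped RealInnerProductSpace
open Finset

/-!
For convex `f` with `(1/τ)`-Lipschitz gradient `g`,
`f x + ⟪g x, y - x⟫ + τ/2 ‖g y - g x‖² ≤ f y`: compare the linear lower model at `x` with the
quadratic upper model at `y`, both evaluated at `y - τ (g y - g x)`. Take `x = v_k'` and `y = v_l`
and average over `l` with the weights `W k l`; the linear terms cancel since `v_k'` is the
barycentre of these weights. Summing over `k`, the column sums turn `∑ₖ ∑ₗ W k l f (v l)` into
`∑ₗ f (v l)`.
-/

section

variable {E : Type*} [NormedAddCommGroup E] [InnerProductSpace ℝ E]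

theorem ConvexOn.add_inner_le_of_hasGradientAt [CompleteSpace E] {f : E → ℝ} {g x : E}
    (hf : ConvexOn ℝ Set.univ f) (hg : HasGradientAt f g x) (y : E) :
    f x + ⟪g, y - x⟫ ≤ f y := by
  set L : ℝ →ᵃ[ℝ] E := AffineMap.lineMap x y
  have hL : HasDerivAt L (y - x) 0 := AffineMap.hasDerivAt_lineMap
  have hφ : HasDerivAt (f ∘ L) ⟪g, y - x⟫ 0 := by
    simpa using hg.hasFDerivAt.comp_hasDerivAt_of_eq (0 : ℝ) hL (by simp [L])
  calc f x + ⟪g, y - x⟫ ≤ f x + slope (f ∘ L) 0 1 := by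
        gcongr
        exact (hf.comp_affineMap L).le_slope_of_hasDerivAt
          (Set.mem_univ 0) (Set.mem_univ 1) zero_lt_one hφ
    _ = f y := by simp [L, slope_def_field]

theorem add_inner_add_norm_sub_sq_le {f : E → ℝ} {g : E → E} {τ : ℝ}
    (hlower : ∀ x y, f x + ⟪g x, y - x⟫ ≤ f y)
    (hupper : ∀ u z, f u ≤ f z + ⟪g z, u - z⟫ + 1 / (2 * τ) * ‖u - z‖ ^ 2) (x y : E) :
    f x + ⟪g x, y - x⟫ + τ / 2 * ‖g y - g x‖ ^ 2 ≤ f y := by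
  set G := g y - g x
  have h1 := hlower x (y - τ • G)
  have h2 := hupper (y - τ • G) y
  have hscale : 1 / (2 * τ) * (τ * τ) = τ / 2 := by
    calc 1 / (2 * τ) * (τ * τ) = τ * τ / τ / 2 := by ring
      _ = τ / 2 := by rw [mul_self_div_self]
  have hG : ⟪g y, G⟫ - ⟪g x, G⟫ = ‖G‖ ^ 2 := by
    rw [← inner_sub_left, real_inner_self_eq_norm_sq]
  rw [show y - τ • G - x = (y - x) - τ • G by abel, inner_sub_right, real_inner_smul_right] at h1
  rw [sub_sub_cancel_left, norm_neg, inner_neg_right, real_inner_smul_right, norm_smul,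
    mul_pow, Real.norm_eq_abs, sq_abs, sq, ← mul_assoc, hscale] at h2
  linear_combination h1 + h2 - τ * hG

theorem add_sum_mul_norm_sub_sq_le_sum_mul {ι : Type*} [Fintype ι] {f : E → ℝ} {g : E → E}
    {τ : ℝ} (hlower : ∀ x y, f x + ⟪g x, y - x⟫ ≤ f y)
    (hupper : ∀ u z, f u ≤ f z + ⟪g z, u - z⟫ + 1 / (2 * τ) * ‖u - z‖ ^ 2)
    {w : ι → ℝ} (hw₀ : ∀ l, 0 ≤ w l) (hw₁ : ∑ l, w l = 1) (v : ι → E) :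
    f (∑ l, w l • v l) + τ / 2 * ∑ l, w l * ‖g (v l) - g (∑ l', w l' • v l')‖ ^ 2
      ≤ ∑ l, w l * f (v l) := by
  set c := ∑ l, w l • v l
  have hcentered : ∑ l, w l * ⟪g c, v l - c⟫ = 0 := by
    simp_rw [← real_inner_smul_right, ← inner_sum, smul_sub, sum_sub_distrib, ← sum_smul, hw₁,
      one_smul, c, sub_self, inner_zero_right]
  calc f c + τ / 2 * ∑ l, w l * ‖g (v l) - g c‖ ^ 2
      = ∑ l, w l * (f c + ⟪g c, v l - c⟫ + τ / 2 * ‖g (v l) - g c‖ ^ 2) := by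
        simp only [mul_add, sum_add_distrib, ← sum_mul, hw₁, hcentered, mul_sum]
        ring_nf
    _ ≤ ∑ l, w l * f (v l) := sum_le_sum fun l _ =>
        mul_le_mul_of_nonneg_left (add_inner_add_norm_sub_sq_le hlower hupper c (v l)) (hw₀ l)

end

theorem averaging_improvement_general
    {d K : ℕ} (τ : ℝ)
    (W : Matrix (Fin K) (Fin K) ℝ)
    (hWnonneg : ∀ k l, 0 ≤ W k l)
    (hWrow : ∀ k, ∑ l, W k l = 1) (hWcol : ∀ l, ∑ k, W k l = 1)
    (f : EuclideanSpace ℝ (Fin d) → ℝ)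
    (gradf : EuclideanSpace ℝ (Fin d) → EuclideanSpace ℝ (Fin d))
    (hfconv : ConvexOn ℝ Set.univ f)
    (hgrad : ∀ z, HasGradientAt f (gradf z) z)
    (hsmooth : ∀ u z, f u ≤ f z + ⟪gradf z, u - z⟫ + 1 / (2 * τ) * ‖u - z‖ ^ 2)
    (v : Fin K → EuclideanSpace ℝ (Fin d)) :
    τ / 2 * ∑ k, ∑ l, W k l * ‖gradf (v l) - gradf (∑ l', W k l' • v l')‖ ^ 2
      ≤ ∑ k, f (v k) - ∑ k, f (∑ l, W k l • v l) := by
  have hlower x y := hfconv.add_inner_le_of_hasGradientAt (hgrad x) y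
  have hrows := sum_le_sum fun k (_ : k ∈ univ) =>
    add_sum_mul_norm_sub_sq_le_sum_mul hlower hsmooth (hWnonneg k) (hWrow k) v
  have hcols : ∑ k, ∑ l, W k l * f (v l) = ∑ l, f (v l) := by
    simp only [sum_comm (γ := Fin K), ← sum_mul, hWcol, one_mul]
  rw [sum_add_distrib, ← mul_sum, hcols] at hrows
  linarith

/-- Averaging improvement for smooth convex functions: let `f` be convex
and `(1/τ)`-smooth, `W` doubly stochastic with nonnegative entries, and
`v_k' := ∑_l W_{kl} v_l`.  Then
`∑_k f(v_k) − ∑_k f(v_k') ≥ (τ/2) ∑_k ∑_l W_{kl} ‖∇f(v_l) − ∇f(v_k')‖²`. -/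
theorem averaging_improvement
    {d K : ℕ} (τ : ℝ) (hτ : 0 < τ)
    (W : Matrix (Fin K) (Fin K) ℝ)
    (hWnonneg : ∀ k l, 0 ≤ W k l)
    (hWrow : ∀ k, ∑ l, W k l = 1) (hWcol : ∀ l, ∑ k, W k l = 1)
    (f : EuclideanSpace ℝ (Fin d) → ℝ)
    (gradf : EuclideanSpace ℝ (Fin d) → EuclideanSpace ℝ (Fin d))
    (hfconv : ConvexOn ℝ Set.univ f)
    (hgrad : ∀ z, HasGradientAt f (gradf z) z)
    (hsmooth : ∀ u z, f u ≤ f z + ⟪gradf z, u - z⟫ + 1 / (2 * τ) * ‖u - z‖ ^ 2)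
    (v : Fin K → EuclideanSpace ℝ (Fin d)) :
    τ / 2 * ∑ k, ∑ l, W k l * ‖gradf (v l) - gradf (∑ l', W k l' • v l')‖ ^ 2
      ≤ ∑ k, f (v k) - ∑ k, f (∑ l, W k l • v l) :=
  averaging_improvement_general τ W hWnonneg hWrow hWcol f gradf hfconv hgrad hsmooth v
end
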